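/- arXiv:2511.09424 — 6 statements merged into one kernel-verified Lean document; each statement's English description precedes it below -/
import Mathlib

section
/- If ψ, ψ': Δ(Ω) → ℝ∪{∞} are convex with ψ(p₀) = ψ'(p₀) = 0, p₀ in the relative interior of both domains, and ∫ψ dπ = ∫ψ' dπ for every finitely supported π with barycenter p₀, then dom ψ = dom ψ' and there exists ξ ∈ ℝ^Ω such that ψ(p) = ψ'(p) + ξ·(p − p₀) for all p ∈ dom ψ. -/
/-!
Testing the equality of the two costs on two-point distributions `t δ_p + (1 - t) δ_q` with
barycenter `p₀`, which exist for every `p ∈ D` because `p₀` lies in the relative interior of `D`,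
shows `D ⊆ D'`, and symmetrically `D' ⊆ D`. Comparing `t δ_r + (1 - t) δ_q` with
`t a δ_{p₁} + t b δ_{p₂} + (1 - t) δ_q` for `r = a p₁ + b p₂` shows that `ψ - ψ'` is both convex
and concave on `D`. Such a function is affine along every ray from the relative interior point
`p₀`; its slopes along these rays are additive and homogeneous on the direction of `D`, hence form
a linear functional, which extends to all of `ℝ^Ω`.
-/

open Finset

def simplex (Ω : Type*) [Fintype Ω] : Set (Ω → ℝ) :=
  {p | (∀ ω, 0 ≤ p ω) ∧ ∑ ω, p ω = 1}

/-- A finitely supported probability distribution over posteriors in `Δ(Ω)`. -/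
structure FinDist (Ω : Type*) [Fintype Ω] where
  w : (Ω → ℝ) →₀ ℝ
  nonneg : ∀ p, 0 ≤ w p
  total : w.sum (fun _ x => x) = 1
  supp_mem : ∀ p ∈ w.support, p ∈ simplex Ω

variable {Ω : Type*} [Fintype Ω]

/-- Barycenter of a distribution over posteriors. -/
def bary (π : FinDist Ω) : Ω → ℝ := π.w.sum (fun p x => x • p)

/-- Expected value of a real function of the posterior. -/
def eVal (π : FinDist Ω) (φ : (Ω → ℝ) → ℝ) : ℝ := π.w.sum (fun p x => x * φ p)

/-- The value of a gross payoff `φ`: `V(φ) = sup_{π ∈ Π(p₀)} ∫φ dπ − c(π)`. -/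
noncomputable def V (c : FinDist Ω → EReal) (p₀ : Ω → ℝ) (φ : (Ω → ℝ) → ℝ) : EReal :=
  ⨆ π : {π : FinDist Ω // bary π = p₀}, (((eVal π.1 φ : ℝ) : EReal) - c π.1)

open Classical in
/-- Extended (`ℝ ∪ {∞}`-valued) integral of a measure of uncertainty `ψ` with domain `D`:
finite (`∫ψ dπ`) if the support of `π` lies in `D`, and `∞` otherwise. -/
noncomputable def extInt (D : Set (Ω → ℝ)) (ψ : (Ω → ℝ) → ℝ) (π : FinDist Ω) : EReal :=
  if (π.w.support : Set (Ω → ℝ)) ⊆ D then ((eVal π ψ : ℝ) : EReal) else ⊤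

open Filter Topology

section LinearOnIntrinsicInterior

variable {E : Type*} [AddCommGroup E] [Module ℝ E] {D : Set E} {f : E → ℝ} {p₀ : E}

theorem eventually_add_smul_mem_of_mem_intrinsicInterior [TopologicalSpace E]
    [IsTopologicalAddGroup E] [ContinuousSMul ℝ E] (hp₀ : p₀ ∈ intrinsicInterior ℝ D) {w : E}
    (hw : w ∈ vectorSpan ℝ D) : ∀ᶠ ε in 𝓝 (0 : ℝ), p₀ + ε • w ∈ D := by
  obtain ⟨x, hx, rfl⟩ := hp₀
  have hline (ε : ℝ) : (x : E) + ε • w ∈ affineSpan ℝ D := by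
    have hεw : ε • w ∈ (affineSpan ℝ D).direction := by
      rw [direction_affineSpan]; exact Submodule.smul_mem _ ε hw
    simpa [add_comm] using AffineSubspace.vadd_mem_of_mem_direction hεw x.2
  let c : ℝ → affineSpan ℝ D := fun ε => ⟨x + ε • w, hline ε⟩
  have hc : Continuous c := by unfold c; fun_prop
  have hc0 : c 0 = x := Subtype.ext (by simp [c])
  have hnhds : interior (((↑) : affineSpan ℝ D → E) ⁻¹' D) ∈ 𝓝 (c 0) :=
    hc0 ▸ isOpen_interior.mem_nhds hx
  filter_upwards [hc.continuousAt.preimage_mem_nhds hnhds] with ε hε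
  exact (interior_subset hε : c ε ∈ ((↑) : affineSpan ℝ D → E) ⁻¹' D)

theorem exists_mem_eq_smul_add_smul_of_mem_intrinsicInterior [TopologicalSpace E]
    [IsTopologicalAddGroup E] [ContinuousSMul ℝ E] (hp₀ : p₀ ∈ intrinsicInterior ℝ D) {p : E}
    (hp : p ∈ D) : ∃ q ∈ D, ∃ t : ℝ, 0 < t ∧ t ≤ 1 ∧ p₀ = t • p + (1 - t) • q := by
  have hp₀p := vsub_mem_vectorSpan ℝ (intrinsicInterior_subset hp₀) hp
  obtain ⟨ε, hεq, hε : 0 < ε⟩ := (((eventually_add_smul_mem_of_mem_intrinsicInterior hp₀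
    hp₀p).filter_mono (nhdsWithin_le_nhds (s := Set.Ioi 0))).and self_mem_nhdsWithin).exists
  refine ⟨_, hεq, ε / (1 + ε), by positivity, (div_le_one (by positivity)).2 (by linarith), ?_⟩
  rw [vsub_eq_sub]
  match_scalars <;> field_simp <;> ring

theorem ConvexOn.map_smul_add_smul_eq_of_concaveOn (hf : ConvexOn ℝ D f)
    (hf' : ConcaveOn ℝ D f) {x y : E} (hx : x ∈ D) (hy : y ∈ D) {a b : ℝ} (ha : 0 ≤ a)
    (hb : 0 ≤ b) (hab : a + b = 1) :
    f (a • x + b • y) = a * f x + b * f y :=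
  le_antisymm (hf.2 hx hy ha hb hab) (hf'.2 hx hy ha hb hab)

theorem ConvexOn.sub_eq_mul_sub_of_concaveOn (hf : ConvexOn ℝ D f) (hf' : ConcaveOn ℝ D f)
    (hp₀ : p₀ ∈ D) {v : E} (hv : p₀ + v ∈ D) {s : ℝ} (hs₀ : 0 ≤ s) (hs₁ : s ≤ 1) :
    f (p₀ + s • v) - f p₀ = s * (f (p₀ + v) - f p₀) := by
  have hmix : p₀ + s • v = s • (p₀ + v) + (1 - s) • p₀ := by module
  rw [hmix, hf.map_smul_add_smul_eq_of_concaveOn hf' hv hp₀ hs₀ (by linarith) (by ring)]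
  ring

theorem ConvexOn.exists_slope_of_concaveOn (hf : ConvexOn ℝ D f) (hf' : ConcaveOn ℝ D f)
    (hp₀ : p₀ ∈ D) {w : E} {δ : ℝ} (hδ : 0 < δ) (hδw : p₀ + δ • w ∈ D) :
    ∃ c, ∀ ε > 0, p₀ + ε • w ∈ D → f (p₀ + ε • w) = f p₀ + ε * c := by
  refine ⟨(f (p₀ + δ • w) - f p₀) / δ, fun ε hε hεw => ?_⟩
  rcases le_total ε δ with hle | hle
  · have h := hf.sub_eq_mul_sub_of_concaveOn hf' hp₀ hδw (s := ε / δ) (by positivity)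
      (div_le_one_of_le₀ hle hδ.le)
    rw [smul_smul, div_mul_cancel₀ _ hδ.ne'] at h
    rw [← sub_eq_iff_eq_add', h]
    field_simp
  · have h := hf.sub_eq_mul_sub_of_concaveOn hf' hp₀ hεw (s := δ / ε) (by positivity)
      (div_le_one_of_le₀ hle hε.le)
    rw [smul_smul, div_mul_cancel₀ _ hε.ne'] at h
    field_simp at h ⊢
    linarith

section Slope

variable {g : E → ℝ}
  (hD : ∀ w ∈ vectorSpan ℝ D, ∀ᶠ ε in 𝓝[>] (0 : ℝ), p₀ + ε • w ∈ D)
  (hg : ∀ w ∈ vectorSpan ℝ D, ∀ ε > 0, p₀ + ε • w ∈ D → f (p₀ + ε • w) = f p₀ + ε * g w)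
include hD hg

theorem slope_smul_of_pos {c : ℝ} (hc : 0 < c) {w : E} (hw : w ∈ vectorSpan ℝ D) :
    g (c • w) = c * g w := by
  have hcw := Submodule.smul_mem _ c hw
  obtain ⟨ε, hεw, hε⟩ := ((hD _ hcw).and self_mem_nhdsWithin).exists
  have h := hg _ hcw ε hε hεw
  rw [smul_smul] at hεw h
  rw [hg w hw _ (mul_pos hε hc) hεw] at h
  exact mul_left_cancel₀ hε.ne' (by linarith)

theorem ConvexOn.slope_add_of_concaveOn (hf : ConvexOn ℝ D f) (hf' : ConcaveOn ℝ D f) {u v : E}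
    (hu : u ∈ vectorSpan ℝ D) (hv : v ∈ vectorSpan ℝ D) : g (u + v) = g u + g v := by
  have hD₂ {w : E} (hw : w ∈ vectorSpan ℝ D) : ∀ᶠ ε in 𝓝[>] (0 : ℝ), p₀ + (2 * ε) • w ∈ D := by
    filter_upwards [hD _ (Submodule.smul_mem _ 2 hw)] with ε hε
    rwa [mul_comm, ← smul_smul]
  have huv := add_mem hu hv
  obtain ⟨ε, ⟨hεu, hεv⟩, hεuv, hε : 0 < ε⟩ :=
    (((hD₂ hu).and (hD₂ hv)).and ((hD _ huv).and self_mem_nhdsWithin)).exists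
  have hmid : p₀ + ε • (u + v) =
      (1 / 2 : ℝ) • (p₀ + (2 * ε) • u) + (1 / 2 : ℝ) • (p₀ + (2 * ε) • v) := by
    module
  have h := hf.map_smul_add_smul_eq_of_concaveOn hf' hεu hεv (a := 1 / 2) (b := 1 / 2)
    (by norm_num) (by norm_num) (by norm_num)
  rw [← hmid, hg _ huv ε hε hεuv, hg u hu _ (by positivity) hεu,
    hg v hv _ (by positivity) hεv] at h
  exact mul_left_cancel₀ hε.ne' (by linarith)

theorem ConvexOn.slope_neg_of_concaveOn (hf : ConvexOn ℝ D f) (hf' : ConcaveOn ℝ D f) {w : E}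
    (hw : w ∈ vectorSpan ℝ D) : g (-w) = -g w := by
  have hw' := neg_mem hw
  obtain ⟨ε, ⟨hεw, hεw'⟩, hε : 0 < ε⟩ :=
    (((hD _ hw).and (hD _ hw')).and self_mem_nhdsWithin).exists
  have hmid : p₀ = (1 / 2 : ℝ) • (p₀ + ε • w) + (1 / 2 : ℝ) • (p₀ + ε • -w) := by module
  have h := hf.map_smul_add_smul_eq_of_concaveOn hf' hεw hεw' (a := 1 / 2) (b := 1 / 2)
    (by norm_num) (by norm_num) (by norm_num)
  rw [← hmid, hg _ hw ε hε hεw, hg _ hw' ε hε hεw'] at h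
  exact mul_left_cancel₀ hε.ne' (by linarith)

theorem ConvexOn.slope_smul_of_concaveOn (hf : ConvexOn ℝ D f) (hf' : ConcaveOn ℝ D f) (c : ℝ)
    {w : E} (hw : w ∈ vectorSpan ℝ D) : g (c • w) = c * g w := by
  rcases lt_trichotomy c 0 with hc | rfl | hc
  · rw [← neg_smul_neg, slope_smul_of_pos hD hg (neg_pos.2 hc) (neg_mem hw),
      hf.slope_neg_of_concaveOn hD hg hf' hw]
    ring
  · obtain ⟨ε, hp₀D, hε⟩ := ((hD _ (zero_mem _)).and self_mem_nhdsWithin).exists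
    have h := hg 0 (zero_mem _) ε hε hp₀D
    rw [smul_zero, add_zero, left_eq_add, mul_eq_zero] at h
    rw [zero_smul, zero_mul]
    exact h.resolve_left hε.ne'
  · exact slope_smul_of_pos hD hg hc hw

end Slope

theorem ConvexOn.exists_linearMap_of_concaveOn [TopologicalSpace E] [IsTopologicalAddGroup E]
    [ContinuousSMul ℝ E] (hf : ConvexOn ℝ D f) (hf' : ConcaveOn ℝ D f)
    (hp₀ : p₀ ∈ intrinsicInterior ℝ D) :
    ∃ Φ : E →ₗ[ℝ] ℝ, ∀ p ∈ D, f p = f p₀ + Φ (p - p₀) := by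
  have hp₀D := intrinsicInterior_subset hp₀
  have hD : ∀ w ∈ vectorSpan ℝ D, ∀ᶠ ε in 𝓝[>] (0 : ℝ), p₀ + ε • w ∈ D := fun w hw =>
    nhdsWithin_le_nhds (eventually_add_smul_mem_of_mem_intrinsicInterior hp₀ hw)
  have hslope (w : E) (hw : w ∈ vectorSpan ℝ D) :
      ∃ c, ∀ ε > 0, p₀ + ε • w ∈ D → f (p₀ + ε • w) = f p₀ + ε * c := by
    obtain ⟨δ, hδw, hδ⟩ := ((hD w hw).and self_mem_nhdsWithin).exists
    exact hf.exists_slope_of_concaveOn hf' hp₀D hδ hδw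
  choose! g hg using hslope
  let Φ₀ : vectorSpan ℝ D →ₗ[ℝ] ℝ :=
    { toFun := fun w => g w
      map_add' := fun u v => hf.slope_add_of_concaveOn hD hg hf' u.2 v.2
      map_smul' := fun c w => hf.slope_smul_of_concaveOn hD hg hf' c w.2 }
  obtain ⟨Φ, hΦ⟩ := Φ₀.exists_extend
  refine ⟨Φ, fun p hp => ?_⟩
  have hpV : p - p₀ ∈ vectorSpan ℝ D := vsub_mem_vectorSpan ℝ hp hp₀D
  have h := hg _ hpV 1 one_pos (by simpa using hp)
  rw [one_smul, add_sub_cancel, one_mul] at h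
  rw [h]
  exact congrArg _ (LinearMap.congr_fun hΦ ⟨_, hpV⟩).symm

end LinearOnIntrinsicInterior

theorem Finsupp.sum_sum_single_smul {ι α R M : Type*} [Fintype ι] [Semiring R]
    [AddCommMonoid M] [Module R M] (a : ι → R) (x : ι → α) (g : α → M) :
    (∑ i, Finsupp.single (x i) (a i)).sum (fun p c => c • g p) = ∑ i, a i • g (x i) := by
  rw [← Finsupp.sum_finsetSum_index (by simp) (by simp [add_smul])]
  simp

theorem Finsupp.exists_eq_of_mem_support_sum_single {ι α M : Type*} [Fintype ι]
    [AddCommMonoid M] {a : ι → M} {x : ι → α} {p : α}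
    (hp : p ∈ (∑ i, Finsupp.single (x i) (a i)).support) : ∃ i, x i = p := by
  classical
  obtain ⟨i, -, hi⟩ := Finset.mem_biUnion.1 (Finsupp.support_finsetSum hp)
  exact ⟨i, ((Finsupp.mem_support_single _ _ _).1 hi).1.symm⟩

namespace FinDist

variable {ι : Type*} [Fintype ι]

noncomputable def ofWeights (a : ι → ℝ) (x : ι → Ω → ℝ) (ha : ∀ i, 0 ≤ a i)
    (hsum : ∑ i, a i = 1) (hx : ∀ i, x i ∈ simplex Ω) : FinDist Ω where
  w := ∑ i, Finsupp.single (x i) (a i)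
  nonneg p := by
    rw [Finsupp.finsetSum_apply]
    exact sum_nonneg fun i _ => by
      rw [Finsupp.single_apply]; split_ifs
      exacts [ha i, le_rfl]
  total := by simpa [hsum] using Finsupp.sum_sum_single_smul a x (fun _ => (1 : ℝ))
  supp_mem p hp := by
    obtain ⟨i, rfl⟩ := Finsupp.exists_eq_of_mem_support_sum_single hp
    exact hx i

variable {a : ι → ℝ} {x : ι → Ω → ℝ} {ha : ∀ i, 0 ≤ a i} {hsum : ∑ i, a i = 1}
  {hx : ∀ i, x i ∈ simplex Ω}

theorem bary_ofWeights : bary (ofWeights a x ha hsum hx) = ∑ i, a i • x i :=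
  Finsupp.sum_sum_single_smul a x id

theorem eVal_ofWeights (φ : (Ω → ℝ) → ℝ) :
    eVal (ofWeights a x ha hsum hx) φ = ∑ i, a i * φ (x i) :=
  Finsupp.sum_sum_single_smul a x φ

theorem mem_support_ofWeights {i : ι} (hi : 0 < a i) :
    x i ∈ (ofWeights a x ha hsum hx).w.support := by
  refine Finsupp.mem_support_iff.2 (hi.trans_le ?_).ne'
  change a i ≤ (∑ j, Finsupp.single (x j) (a j)) (x i)
  rw [Finsupp.finsetSum_apply]
  refine le_of_eq_of_le (by simp) (single_le_sum (fun j _ => ?_) (mem_univ i))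
  rw [Finsupp.single_apply]; split_ifs
  exacts [ha j, le_rfl]

end FinDist

section SamePosteriorSeparableCost

variable {D D' : Set (Ω → ℝ)} {ψ ψ' : (Ω → ℝ) → ℝ} {p₀ : Ω → ℝ}

theorem forall_mem_and_sum_eq_of_extInt_eq (hD : D ⊆ simplex Ω)
    (heq : ∀ π : FinDist Ω, bary π = p₀ → extInt D ψ π = extInt D' ψ' π) {ι : Type*} [Fintype ι]
    {a : ι → ℝ} {x : ι → Ω → ℝ} (ha : ∀ i, 0 ≤ a i) (hsum : ∑ i, a i = 1) (hx : ∀ i, x i ∈ D)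
    (hbar : ∑ i, a i • x i = p₀) :
    (∀ i, 0 < a i → x i ∈ D') ∧ ∑ i, a i * ψ (x i) = ∑ i, a i * ψ' (x i) := by
  let π := FinDist.ofWeights a x ha hsum fun i => hD (hx i)
  have hsupp : (π.w.support : Set (Ω → ℝ)) ⊆ D := fun p hp => by
    obtain ⟨i, rfl⟩ := Finsupp.exists_eq_of_mem_support_sum_single hp
    exact hx i
  have h := heq π (FinDist.bary_ofWeights.trans hbar)
  rw [extInt, if_pos hsupp] at h
  by_cases hsupp' : (π.w.support : Set (Ω → ℝ)) ⊆ D'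
  · rw [extInt, if_pos hsupp', EReal.coe_eq_coe_iff, FinDist.eVal_ofWeights,
      FinDist.eVal_ofWeights] at h
    exact ⟨fun i hi => hsupp' (FinDist.mem_support_ofWeights hi), h⟩
  · rw [extInt, if_neg hsupp'] at h
    exact absurd h (EReal.coe_ne_top _)

theorem subset_of_extInt_eq (hD : D ⊆ simplex Ω) (hp₀ : p₀ ∈ intrinsicInterior ℝ D)
    (heq : ∀ π : FinDist Ω, bary π = p₀ → extInt D ψ π = extInt D' ψ' π) : D ⊆ D' := by
  intro p hp
  obtain ⟨q, hq, t, ht₀, ht₁, hbar⟩ := exists_mem_eq_smul_add_smul_of_mem_intrinsicInterior hp₀ hp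
  exact (forall_mem_and_sum_eq_of_extInt_eq hD heq (a := ![t, 1 - t]) (x := ![p, q])
    (Fin.forall_fin_two.2 ⟨ht₀.le, sub_nonneg.2 ht₁⟩) (by simp) (Fin.forall_fin_two.2 ⟨hp, hq⟩)
    (by simpa using hbar.symm)).1 0 ht₀

theorem sub_apply_smul_add_smul_of_extInt_eq (hD : D ⊆ simplex Ω) (hDc : Convex ℝ D)
    (hp₀ : p₀ ∈ intrinsicInterior ℝ D)
    (heq : ∀ π : FinDist Ω, bary π = p₀ → extInt D ψ π = extInt D' ψ' π) {p₁ p₂ : Ω → ℝ}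
    (hp₁ : p₁ ∈ D) (hp₂ : p₂ ∈ D) {a b : ℝ} (ha : 0 ≤ a) (hb : 0 ≤ b) (hab : a + b = 1) :
    (ψ - ψ') (a • p₁ + b • p₂) = a * (ψ - ψ') p₁ + b * (ψ - ψ') p₂ := by
  have hr : a • p₁ + b • p₂ ∈ D := hDc hp₁ hp₂ ha hb hab
  obtain ⟨q, hq, t, ht₀, ht₁, hbar⟩ := exists_mem_eq_smul_add_smul_of_mem_intrinsicInterior hp₀ hr
  have h₁ := (forall_mem_and_sum_eq_of_extInt_eq hD heq (a := ![t, 1 - t])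
    (x := ![a • p₁ + b • p₂, q]) (Fin.forall_fin_two.2 ⟨ht₀.le, sub_nonneg.2 ht₁⟩) (by simp)
    (Fin.forall_fin_two.2 ⟨hr, hq⟩) (by simpa using hbar.symm)).2
  have h₂ := (forall_mem_and_sum_eq_of_extInt_eq hD heq (a := ![t * a, t * b, 1 - t])
    (x := ![p₁, p₂, q]) (Fin.forall_fin_succ.2 ⟨mul_nonneg ht₀.le ha,
      Fin.forall_fin_two.2 ⟨mul_nonneg ht₀.le hb, sub_nonneg.2 ht₁⟩⟩)
    (by simp only [Fin.sum_univ_three, Matrix.cons_val]; linear_combination t * hab)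
    (Fin.forall_fin_succ.2 ⟨hp₁, Fin.forall_fin_two.2 ⟨hp₂, hq⟩⟩)
    (by simp only [Fin.sum_univ_three, Matrix.cons_val, hbar]; module)).2
  simp only [Fin.sum_univ_two, Fin.sum_univ_three, Matrix.cons_val] at h₁ h₂
  simp only [Pi.sub_apply]
  exact mul_left_cancel₀ ht₀.ne' (by linear_combination h₁ - h₂)

theorem convexOn_sub_and_concaveOn_sub_of_extInt_eq (hD : D ⊆ simplex Ω) (hDc : Convex ℝ D)
    (hp₀ : p₀ ∈ intrinsicInterior ℝ D)
    (heq : ∀ π : FinDist Ω, bary π = p₀ → extInt D ψ π = extInt D' ψ' π) :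
    ConvexOn ℝ D (ψ - ψ') ∧ ConcaveOn ℝ D (ψ - ψ') :=
  have h {x} (hx : x ∈ D) {y} (hy : y ∈ D) {a b : ℝ} (ha : 0 ≤ a) (hb : 0 ≤ b) (hab : a + b = 1) :=
    sub_apply_smul_add_smul_of_extInt_eq hD hDc hp₀ heq hx hy ha hb hab
  ⟨⟨hDc, fun _ hx _ hy _ _ ha hb hab => (h hx hy ha hb hab).le⟩,
    ⟨hDc, fun _ hx _ hy _ _ ha hb hab => (h hx hy ha hb hab).ge⟩⟩

end SamePosteriorSeparableCost

theorem stmt3_general (p₀ : Ω → ℝ) (D D' : Set (Ω → ℝ)) (hD : D ⊆ simplex Ω) (hD' : D' ⊆ simplex Ω)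
    (ψ ψ' : (Ω → ℝ) → ℝ) (hconv : ConvexOn ℝ D ψ)
    (hz : ψ p₀ = 0) (hz' : ψ' p₀ = 0)
    (hri : p₀ ∈ intrinsicInterior ℝ D) (hri' : p₀ ∈ intrinsicInterior ℝ D')
    (heq : ∀ π : FinDist Ω, bary π = p₀ → extInt D ψ π = extInt D' ψ' π) :
    D = D' ∧ ∃ ξ : Ω → ℝ, ∀ p ∈ D, ψ p = ψ' p + ∑ ω, ξ ω * (p ω - p₀ ω) := by
  classical
  refine ⟨(subset_of_extInt_eq hD hri heq).antisymm
    (subset_of_extInt_eq hD' hri' fun π h => (heq π h).symm), ?_⟩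
  obtain ⟨hconvex, hconcave⟩ := convexOn_sub_and_concaveOn_sub_of_extInt_eq hD hconv.1 hri heq
  obtain ⟨Φ, hΦ⟩ := hconvex.exists_linearMap_of_concaveOn hconcave hri
  refine ⟨fun ω => Φ fun j => if ω = j then 1 else 0, fun p hp => ?_⟩
  have h := hΦ p hp
  rw [Pi.sub_apply, Pi.sub_apply, hz, hz', sub_zero, zero_add, Φ.pi_apply_eq_sum_univ] at h
  rw [← sub_eq_iff_eq_add', h]
  exact sum_congr rfl fun ω _ => mul_comm _ _

/-- two canonical measures of uncertainty representing the same
posterior-separable cost have the same domain and differ by an affine function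
vanishing at `p₀`. -/
theorem stmt3 (p₀ : Ω → ℝ) (D D' : Set (Ω → ℝ)) (hD : D ⊆ simplex Ω) (hD' : D' ⊆ simplex Ω)
    (ψ ψ' : (Ω → ℝ) → ℝ) (hconv : ConvexOn ℝ D ψ) (hconv' : ConvexOn ℝ D' ψ')
    (hz : ψ p₀ = 0) (hz' : ψ' p₀ = 0)
    (hri : p₀ ∈ intrinsicInterior ℝ D) (hri' : p₀ ∈ intrinsicInterior ℝ D')
    (heq : ∀ π : FinDist Ω, bary π = p₀ → extInt D ψ π = extInt D' ψ' π) :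
    D = D' ∧ ∃ ξ : Ω → ℝ, ∀ p ∈ D, ψ p = ψ' p + ∑ ω, ξ ω * (p ω - p₀ ω) :=
  stmt3_general p₀ D D' hD hD' ψ ψ' hconv hz hz' hri hri' heq
end

section
/- Let ζ: C → ℝ be defined on a convex set C ⊆ Δ(Ω) with p₀ ∈ ri(C) and ζ(p₀) = 0. If ∫ζ dπ = 0 for every finitely supported probability measure π on C with barycenter p₀, then ζ is affine on C. -/
open Finset

variable {Ω : Type*} [Fintype Ω]

/-! Let `m = α x + (1 - α) y`. Since `p₀` lies in the relative interior of `C`, the segment from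
`m` through `p₀` can be prolonged a little inside `C`, giving `z ∈ C` and `t ∈ (0, 1)` with
`p₀ = t z + (1 - t) m`. For every distribution `μ` on `C` with barycenter `m`, the mixture
`t δ_z + (1 - t) μ` has barycenter `p₀`, so `t ζ(z) + (1 - t) ∫ζ dμ = 0`. Comparing `μ = δ_m` with
`μ = α δ_x + (1 - α) δ_y` gives `ζ(m) = α ζ(x) + (1 - α) ζ(y)`. -/

theorem exists_mem_openSegment_of_mem_intrinsicInterior {E : Type*} [AddCommGroup E]
    [Module ℝ E] [TopologicalSpace E] [IsTopologicalAddGroup E] [ContinuousSMul ℝ E]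
    {C : Set E} {p₀ m : E} (hp₀ : p₀ ∈ intrinsicInterior ℝ C) (hm : m ∈ affineSpan ℝ C) :
    ∃ z ∈ C, p₀ ∈ openSegment ℝ z m := by
  obtain ⟨q, hq, rfl⟩ := mem_intrinsicInterior.1 hp₀
  let g : ℝ → affineSpan ℝ C := fun s => ⟨AffineMap.lineMap m q s, AffineMap.lineMap_mem s hm q.2⟩
  have hg : Continuous g := AffineMap.lineMap_continuous.subtype_mk _
  have hg1 : g 1 = q := Subtype.ext (AffineMap.lineMap_apply_one m q)
  have hnear : ∀ᶠ s in nhdsWithin 1 (Set.Ioi 1), g s ∈ interior ((↑) ⁻¹' C) :=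
    nhdsWithin_le_nhds <| hg.continuousAt.preimage_mem_nhds (hg1 ▸ isOpen_interior.mem_nhds hq)
  obtain ⟨s, hsC, hs1 : 1 < s⟩ := (hnear.and self_mem_nhdsWithin).exists
  have hs0 : s ≠ 0 := by linarith
  have hzC : AffineMap.lineMap m (q : E) s ∈ C :=
    interior_subset (s := ((↑) : affineSpan ℝ C → E) ⁻¹' C) hsC
  refine ⟨_, hzC, s⁻¹, 1 - s⁻¹, inv_pos.2 (by linarith), sub_pos.2 (inv_lt_one_of_one_lt₀ hs1),
    add_sub_cancel _ _, ?_⟩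
  rw [AffineMap.lineMap_apply_module]
  match_scalars
  · field_simp; ring
  · field_simp

namespace FinDist

noncomputable def dirac (p : Ω → ℝ) (hp : p ∈ simplex Ω) : FinDist Ω where
  w := Finsupp.single p 1
  nonneg q := by
    rw [Finsupp.single_apply]
    split_ifs <;> norm_num
  total := Finsupp.sum_single_index rfl
  supp_mem q hq := by
    rwa [Finset.mem_singleton.1 (Finsupp.support_single_subset hq)]

noncomputable def mix (t : ℝ) (ht : t ∈ Set.Icc (0 : ℝ) 1) (μ ν : FinDist Ω) : FinDist Ω where
  w := t • μ.w + (1 - t) • ν.w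
  nonneg p := by
    have := μ.nonneg p
    have := ν.nonneg p
    simp only [Finsupp.add_apply, Finsupp.smul_apply, smul_eq_mul]
    nlinarith [ht.1, ht.2]
  total := by
    rw [Finsupp.sum_add_index' (fun _ => rfl) (fun _ _ _ => rfl),
      Finsupp.sum_smul_index' (fun _ => rfl), Finsupp.sum_smul_index' (fun _ => rfl)]
    simp only [smul_eq_mul, ← Finsupp.mul_sum, μ.total, ν.total]
    ring
  supp_mem p hp := by
    rcases Finset.mem_union.1 (Finsupp.support_add hp) with h | h
    · exact μ.supp_mem p (Finsupp.support_smul h)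
    · exact ν.supp_mem p (Finsupp.support_smul h)

theorem support_dirac_subset {C : Set (Ω → ℝ)} {p : Ω → ℝ} (hp : p ∈ simplex Ω) (hpC : p ∈ C) :
    ((dirac p hp).w.support : Set (Ω → ℝ)) ⊆ C := by
  simpa [dirac] using hpC

theorem support_mix_subset {C : Set (Ω → ℝ)} (t : ℝ) (ht : t ∈ Set.Icc (0 : ℝ) 1)
    {μ ν : FinDist Ω} (hμ : (μ.w.support : Set (Ω → ℝ)) ⊆ C)
    (hν : (ν.w.support : Set (Ω → ℝ)) ⊆ C) :
    ((mix t ht μ ν).w.support : Set (Ω → ℝ)) ⊆ C := by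
  intro p hp
  rcases Finset.mem_union.1 (Finsupp.support_add hp) with h | h
  · exact hμ (Finsupp.support_smul h)
  · exact hν (Finsupp.support_smul h)

end FinDist

open FinDist

theorem bary_eq_linearCombination (π : FinDist Ω) :
    bary π = Finsupp.linearCombination ℝ id π.w := rfl

theorem eVal_eq_linearCombination (π : FinDist Ω) (φ : (Ω → ℝ) → ℝ) :
    eVal π φ = Finsupp.linearCombination ℝ φ π.w := rfl

theorem bary_dirac (p : Ω → ℝ) (hp : p ∈ simplex Ω) : bary (dirac p hp) = p := by
  simp [bary_eq_linearCombination, dirac]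

theorem eVal_dirac (p : Ω → ℝ) (hp : p ∈ simplex Ω) (φ : (Ω → ℝ) → ℝ) :
    eVal (dirac p hp) φ = φ p := by
  simp [eVal_eq_linearCombination, dirac]

theorem bary_mix (t : ℝ) (ht : t ∈ Set.Icc (0 : ℝ) 1) (μ ν : FinDist Ω) :
    bary (mix t ht μ ν) = t • bary μ + (1 - t) • bary ν := by
  simp [bary_eq_linearCombination, mix]

theorem eVal_mix (t : ℝ) (ht : t ∈ Set.Icc (0 : ℝ) 1) (μ ν : FinDist Ω) (φ : (Ω → ℝ) → ℝ) :
    eVal (mix t ht μ ν) φ = t * eVal μ φ + (1 - t) * eVal ν φ := by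
  simp [eVal_eq_linearCombination, mix]

theorem eVal_eq_apply_bary {C : Set (Ω → ℝ)} (hCs : C ⊆ simplex Ω) {p₀ : Ω → ℝ}
    (hri : p₀ ∈ intrinsicInterior ℝ C) {ζ : (Ω → ℝ) → ℝ}
    (hInt : ∀ π : FinDist Ω, (π.w.support : Set (Ω → ℝ)) ⊆ C → bary π = p₀ → eVal π ζ = 0)
    {μ : FinDist Ω} (hμ : (μ.w.support : Set (Ω → ℝ)) ⊆ C) (hμC : bary μ ∈ C) :
    eVal μ ζ = ζ (bary μ) := by
  obtain ⟨z, hzC, t, s, ht, hs, hts, hp₀⟩ :=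
    exists_mem_openSegment_of_mem_intrinsicInterior hri (subset_affineSpan ℝ C hμC)
  obtain rfl : s = 1 - t := by linarith
  have htI : t ∈ Set.Icc (0 : ℝ) 1 := ⟨ht.le, by linarith⟩
  have hmix : ∀ ν : FinDist Ω, (ν.w.support : Set (Ω → ℝ)) ⊆ C → bary ν = bary μ →
      t * ζ z + (1 - t) * eVal ν ζ = 0 := by
    intro ν hνC hν
    have hzero := hInt _ (support_mix_subset t htI (support_dirac_subset (hCs hzC) hzC) hνC)
      (by rw [bary_mix, bary_dirac, hν, hp₀])
    rwa [eVal_mix, eVal_dirac] at hzero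
  have hδ := hmix _ (support_dirac_subset (hCs hμC) hμC) (bary_dirac _ _)
  rw [eVal_dirac] at hδ
  have hμζ := hmix μ hμ rfl
  exact mul_left_cancel₀ hs.ne' (by linarith)

theorem stmt4_general (C : Set (Ω → ℝ)) (hCs : C ⊆ simplex Ω) (hC : Convex ℝ C)
    (p₀ : Ω → ℝ) (hri : p₀ ∈ intrinsicInterior ℝ C)
    (ζ : (Ω → ℝ) → ℝ)
    (hInt : ∀ π : FinDist Ω, (π.w.support : Set (Ω → ℝ)) ⊆ C → bary π = p₀ → eVal π ζ = 0) :
    ∀ x ∈ C, ∀ y ∈ C, ∀ α ∈ Set.Icc (0:ℝ) 1,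
      ζ (α • x + (1 - α) • y) = α * ζ x + (1 - α) * ζ y := by
  rintro x hx y hy α hα
  let μ := mix α hα (dirac x (hCs hx)) (dirac y (hCs hy))
  have hbary : bary μ = α • x + (1 - α) • y := by
    rw [bary_mix, bary_dirac, bary_dirac]
  have hsupp : (μ.w.support : Set (Ω → ℝ)) ⊆ C :=
    support_mix_subset α hα (support_dirac_subset _ hx) (support_dirac_subset _ hy)
  have hmC : bary μ ∈ C := hbary ▸ hC hx hy hα.1 (sub_nonneg.2 hα.2) (add_sub_cancel _ _)
  have hJensen := eVal_eq_apply_bary hCs hri hInt hsupp hmC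
  rwa [hbary, eVal_mix, eVal_dirac, eVal_dirac, eq_comm] at hJensen

/-- if `ζ(p₀) = 0` and `∫ζ dπ = 0` for every finitely supported
probability measure on `C` with barycenter `p₀ ∈ ri(C)`, then `ζ` is affine on `C`. -/
theorem stmt4 (C : Set (Ω → ℝ)) (hCs : C ⊆ simplex Ω) (hC : Convex ℝ C)
    (p₀ : Ω → ℝ) (hri : p₀ ∈ intrinsicInterior ℝ C)
    (ζ : (Ω → ℝ) → ℝ) (hz : ζ p₀ = 0)
    (hInt : ∀ π : FinDist Ω, (π.w.support : Set (Ω → ℝ)) ⊆ C → bary π = p₀ → eVal π ζ = 0) :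
    ∀ x ∈ C, ∀ y ∈ C, ∀ α ∈ Set.Icc (0:ℝ) 1,
      ζ (α • x + (1 - α) • y) = α * ζ x + (1 - α) * ζ y :=
  stmt4_general C hCs hC p₀ hri ζ hInt
end

section
/- Fix a convex function ψ̄: ℝ^M → ℝ∪{∞}, points p̄₁,…,p̄_K, and λ_i ∈ ∂ψ̄(p̄_i) with λ_i + δ ∈ ∂ψ̄(p̄_i) for all i, where δ·(p̄_i − p̄₀) = 0 for all i and p̄₀ ∈ co{p̄₁,…,p̄_K}. Define the piecewise-affine function φ(p̄) = max_i [λ_i·(p̄ − p̄_i) + ψ̄(p̄_i)]. Then φ ≤ ψ̄ everywhere, φ(p̄_i) = ψ̄(p̄_i) for each i, and for N = φ − ψ̄ both the zero hyperplane and the hyperplane p̄ ↦ −δ·(p̄ − p̄₀) are optimal supports: N ≤ 0, N(p̄_i) = 0, and N(p̄) ≤ −δ·(p̄ − p̄₀) for all p̄ in the domain of ψ̄. -/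
/-! Each affine piece `q ↦ λᵢ·(q − pᵢ) + ψ(pᵢ)` lies below `ψ` by the subgradient inequality
and touches it at `pᵢ`, so their maximum does too. Since `λᵢ + δ` is also a subgradient, each
piece even lies below `ψ(q) − δ·(q − pᵢ)`, and `δ ⊥ pᵢ − p₀` makes these tilts one and the same
hyperplane `−δ·(q − p₀)`, independent of `i`. -/

open Finset

/-- Euclidean dot product on `ℝ^M`. -/
def dotp {M : ℕ} (a b : Fin M → ℝ) : ℝ := ∑ j, a j * b j

/-- The subdifferential of `ψ` at `y`, relative to the domain `Y`. -/
def subdiff {M : ℕ} (Y : Set (Fin M → ℝ)) (ψ : (Fin M → ℝ) → ℝ) (y : Fin M → ℝ) :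
    Set (Fin M → ℝ) :=
  {l | ∀ q ∈ Y, dotp l (q - y) ≤ ψ q - ψ y}

lemma dotp_eq_dotProduct {M : ℕ} (a b : Fin M → ℝ) : dotp a b = a ⬝ᵥ b := rfl

section MaxAffine

variable {M : ℕ} {ι : Type*} (lam p : ι → (Fin M → ℝ)) (ψ : (Fin M → ℝ) → ℝ)

noncomputable def maxAffine (q : Fin M → ℝ) : ℝ := ⨆ i, (dotp (lam i) (q - p i) + ψ (p i))

variable {lam p ψ} {Y : Set (Fin M → ℝ)}

lemma maxAffine_le_sub_dotp [Nonempty ι] {δ p₀ : Fin M → ℝ}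
    (hlamδ : ∀ i, lam i + δ ∈ subdiff Y ψ (p i)) (hδ : ∀ i, dotp δ (p i - p₀) = 0)
    {q : Fin M → ℝ} (hq : q ∈ Y) :
    maxAffine lam p ψ q ≤ ψ q - dotp δ (q - p₀) := by
  refine ciSup_le fun i => ?_
  have hsub := hlamδ i q hq
  have hshift : dotp δ (q - p i) = dotp δ (q - p₀) := by
    have h := hδ i
    simp only [dotp_eq_dotProduct, dotProduct_sub] at h ⊢
    linarith
  rw [dotp_eq_dotProduct, add_dotProduct, ← dotp_eq_dotProduct, ← dotp_eq_dotProduct,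
    hshift] at hsub
  linarith

lemma maxAffine_le [Nonempty ι] (hlam : ∀ i, lam i ∈ subdiff Y ψ (p i))
    {q : Fin M → ℝ} (hq : q ∈ Y) : maxAffine lam p ψ q ≤ ψ q := by
  have h := maxAffine_le_sub_dotp (δ := 0) (p₀ := 0) (by simpa using hlam)
    (fun _ => by simp [dotp_eq_dotProduct]) hq
  simpa [dotp_eq_dotProduct] using h

lemma maxAffine_apply_eq [Finite ι] (hlam : ∀ i, lam i ∈ subdiff Y ψ (p i))
    (hpY : ∀ i, p i ∈ Y) (i : ι) : maxAffine lam p ψ (p i) = ψ (p i) := by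
  have : Nonempty ι := ⟨i⟩
  refine le_antisymm (maxAffine_le hlam (hpY i)) ?_
  calc ψ (p i) = dotp (lam i) (p i - p i) + ψ (p i) := by simp [dotp_eq_dotProduct]
    _ ≤ maxAffine lam p ψ (p i) :=
      le_ciSup (f := fun j => dotp (lam j) (p i - p j) + ψ (p j)) (Set.finite_range _).bddAbove i

end MaxAffine

theorem stmt7_general {M : ℕ} {ι : Type*} [Fintype ι] [Nonempty ι]
    (Y : Set (Fin M → ℝ)) (ψ : (Fin M → ℝ) → ℝ)
    (p : ι → (Fin M → ℝ)) (hpY : ∀ i, p i ∈ Y)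
    (p₀ : Fin M → ℝ)
    (lam : ι → (Fin M → ℝ)) (δ : Fin M → ℝ)
    (hlam : ∀ i, lam i ∈ subdiff Y ψ (p i))
    (hlamδ : ∀ i, lam i + δ ∈ subdiff Y ψ (p i))
    (hδ : ∀ i, dotp δ (p i - p₀) = 0) :
    (∀ q ∈ Y, (⨆ i, (dotp (lam i) (q - p i) + ψ (p i))) ≤ ψ q) ∧
    (∀ i, (⨆ j, (dotp (lam j) (p i - p j) + ψ (p j))) = ψ (p i)) ∧
    (∀ q ∈ Y, (⨆ i, (dotp (lam i) (q - p i) + ψ (p i))) - ψ q ≤ 0) ∧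
    (∀ i, (⨆ j, (dotp (lam j) (p i - p j) + ψ (p j))) - ψ (p i) = 0) ∧
    (∀ q ∈ Y, (⨆ i, (dotp (lam i) (q - p i) + ψ (p i))) - ψ q ≤ - dotp δ (q - p₀)) := by
  have hle : ∀ q ∈ Y, maxAffine lam p ψ q ≤ ψ q := fun q hq => maxAffine_le hlam hq
  have heq : ∀ i, maxAffine lam p ψ (p i) = ψ (p i) := maxAffine_apply_eq hlam hpY
  refine ⟨hle, heq, fun q hq => sub_nonpos.mpr (hle q hq), fun i => sub_eq_zero.mpr (heq i),
    fun q hq => ?_⟩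
  have h := maxAffine_le_sub_dotp hlamδ hδ hq
  unfold maxAffine at h
  linarith

/-- if `λᵢ, λᵢ + δ ∈ ∂ψ̄(p̄ᵢ)` with `δ ⊥ (p̄ᵢ − p̄₀)` and
`p̄₀ ∈ co{p̄ᵢ}`, then the piecewise-affine `φ(q) = maxᵢ [λᵢ·(q − p̄ᵢ) + ψ̄(p̄ᵢ)]`
satisfies `φ ≤ ψ̄`, touches `ψ̄` at each `p̄ᵢ`, and the net utility `N = φ − ψ̄`
is supported both by the zero hyperplane and by `q ↦ −δ·(q − p̄₀)`. -/
theorem stmt7 {M : ℕ} {ι : Type*} [Fintype ι] [Nonempty ι]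
    (Y : Set (Fin M → ℝ)) (ψ : (Fin M → ℝ) → ℝ) (hconv : ConvexOn ℝ Y ψ)
    (p : ι → (Fin M → ℝ)) (hpY : ∀ i, p i ∈ Y)
    (p₀ : Fin M → ℝ) (hco : p₀ ∈ convexHull ℝ (Set.range p))
    (lam : ι → (Fin M → ℝ)) (δ : Fin M → ℝ)
    (hlam : ∀ i, lam i ∈ subdiff Y ψ (p i))
    (hlamδ : ∀ i, lam i + δ ∈ subdiff Y ψ (p i))
    (hδ : ∀ i, dotp δ (p i - p₀) = 0) :
    (∀ q ∈ Y, (⨆ i, (dotp (lam i) (q - p i) + ψ (p i))) ≤ ψ q) ∧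
    (∀ i, (⨆ j, (dotp (lam j) (p i - p j) + ψ (p j))) = ψ (p i)) ∧
    (∀ q ∈ Y, (⨆ i, (dotp (lam i) (q - p i) + ψ (p i))) - ψ q ≤ 0) ∧
    (∀ i, (⨆ j, (dotp (lam j) (p i - p j) + ψ (p j))) - ψ (p i) = 0) ∧
    (∀ q ∈ Y, (⨆ i, (dotp (lam i) (q - p i) + ψ (p i))) - ψ q ≤ - dotp δ (q - p₀)) :=
  stmt7_general Y ψ p hpY p₀ lam δ hlam hlamδ hδ
end

section
/- Suppose ψ̄ is convex on Y ⊆ ℝ^M and satisfies joint-directional differentiability relative to p̄₀ ∈ int Y. Then for every menu F (finite family of affine functions a_i·p̄ + b_i), the set Λ_F of optimal supporting hyperplanes of N*_F = φ_F − ψ̄ at p̄₀ is a singleton. -/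
open Finset

/-- Joint-directional differentiability of `ψ` (relative to `Y`) at prior `p₀`:
there are no nonzero direction `δ` and points `{p̄ᵢ}` with `p₀ ∈ co{p̄ᵢ}` such that
`ψ` is non-differentiable in direction `δ` at each `p̄ᵢ` with `δ ⊥ (p̄ᵢ − p₀)`. -/
def JDD {M : ℕ} (Y : Set (Fin M → ℝ)) (ψ : (Fin M → ℝ) → ℝ) (p₀ : Fin M → ℝ) : Prop :=
  ¬ ∃ (δ : Fin M → ℝ) (K : ℕ) (p : Fin K → (Fin M → ℝ)) (lam : Fin K → (Fin M → ℝ)),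
      δ ≠ 0 ∧ (∀ i, p i ∈ Y) ∧ p₀ ∈ convexHull ℝ (Set.range p) ∧
      ∀ i, lam i ∈ subdiff Y ψ (p i) ∧ lam i + δ ∈ subdiff Y ψ (p i) ∧
        dotp δ (p i - p₀) = 0

/-- A finitely supported probability distribution over posteriors `y ∈ Y ⊆ ℝ^M`
with barycenter `x₀` (an element of `Π(p̄₀)` after translation to `ℝ^M`). -/
structure DistOn {M : ℕ} (Y : Set (Fin M → ℝ)) (x₀ : Fin M → ℝ) where
  w : (Fin M → ℝ) →₀ ℝ
  nonneg : ∀ p, 0 ≤ w p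
  total : w.sum (fun _ x => x) = 1
  supp : ∀ p ∈ w.support, p ∈ Y
  bary : w.sum (fun p x => x • p) = x₀

/-- Expected value of `f` under a distribution over posteriors. -/
def eValM {M : ℕ} {Y : Set (Fin M → ℝ)} {x₀ : Fin M → ℝ} (π : DistOn Y x₀)
    (f : (Fin M → ℝ) → ℝ) : ℝ :=
  π.w.sum (fun p x => x * f p)

/-- `φ_F` for a menu `F` of acts with affine utilities `q ↦ a·q + b`, `(a, b) ∈ F`. -/
noncomputable def phiMenuM {M : ℕ} (F : Finset ((Fin M → ℝ) × ℝ)) (q : Fin M → ℝ) : ℝ :=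
  sSup ((fun ab => dotp ab.1 q + ab.2) '' (F : Set ((Fin M → ℝ) × ℝ)))

/-- `Λ_F`: the set of slopes of optimal supporting hyperplanes of `N*_F = φ_F − ψ̄`
through `(x₀, v)`, where `v = V(φ_F)`. -/
def Lam {M : ℕ} (Y : Set (Fin M → ℝ)) (ψ : (Fin M → ℝ) → ℝ) (x₀ : Fin M → ℝ)
    (F : Finset ((Fin M → ℝ) × ℝ)) (v : ℝ) : Set (Fin M → ℝ) :=
  {l | ∀ y ∈ Y, phiMenuM F y - ψ y ≤ dotp l (y - x₀) + v}

lemma dotp_sub_right {M : ℕ} (l a b : Fin M → ℝ) : dotp l (a - b) = dotp l a - dotp l b := by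
  simp [dotp, ← Finset.sum_sub_distrib, mul_sub]

lemma dotp_sub_left {M : ℕ} (a b c : Fin M → ℝ) : dotp (a - b) c = dotp a c - dotp b c := by
  simp [dotp, ← Finset.sum_sub_distrib, sub_mul]

lemma dotp_sum_smul {M : ℕ} {ι : Type*} (l : Fin M → ℝ) (t : Finset ι) (μ : ι → ℝ)
    (y : ι → Fin M → ℝ) : dotp l (∑ i ∈ t, μ i • y i) = ∑ i ∈ t, μ i * dotp l (y i) := by
  simp only [dotp, Finset.mul_sum, Finset.sum_apply, Pi.smul_apply, smul_eq_mul]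
  rw [Finset.sum_comm]
  exact Finset.sum_congr rfl fun i _ => Finset.sum_congr rfl fun j _ => by ring

lemma abs_dotp_le {M : ℕ} (a v : Fin M → ℝ) : |dotp a v| ≤ (∑ j, |a j|) * ‖v‖ := by
  calc |dotp a v| ≤ ∑ j, |a j * v j| := Finset.abs_sum_le_sum_abs _ _
    _ ≤ ∑ j, |a j| * ‖v‖ := by
        refine Finset.sum_le_sum fun j _ => ?_
        rw [abs_mul]
        exact mul_le_mul_of_nonneg_left ((Real.norm_eq_abs _ ▸ norm_le_pi_norm v j)) (abs_nonneg _)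
    _ = (∑ j, |a j|) * ‖v‖ := by rw [Finset.sum_mul]

lemma existsDist {M : ℕ} (Y : Set (Fin M → ℝ)) (x₀ : Fin M → ℝ) {ι : Type*} (t : Finset ι)
    (μ : ι → ℝ) (y : ι → Fin M → ℝ) (hμ : ∀ i ∈ t, 0 ≤ μ i) (hsum : ∑ i ∈ t, μ i = 1)
    (hY : ∀ i ∈ t, y i ∈ Y) (hbary : ∑ i ∈ t, μ i • y i = x₀) :
    ∃ π : DistOn Y x₀, ∀ f : (Fin M → ℝ) → ℝ, eValM π f = ∑ i ∈ t, μ i * f (y i) := by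
  classical
  set w : (Fin M → ℝ) →₀ ℝ := ∑ i ∈ t, Finsupp.single (y i) (μ i) with hw
  have key : ∀ {N : Type} [AddCommMonoid N] (h : (Fin M → ℝ) → ℝ → N),
      (∀ a, h a 0 = 0) → (∀ a b₁ b₂, h a (b₁ + b₂) = h a b₁ + h a b₂) →
      w.sum h = ∑ i ∈ t, h (y i) (μ i) := by
    intro N _ h h0 hadd
    rw [hw, ← Finsupp.sum_finset_sum_index h0 hadd]
    exact Finset.sum_congr rfl fun i _ => Finsupp.sum_single_index (h0 _)
  have hnn : ∀ p, 0 ≤ w p := by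
    intro p
    rw [hw, Finsupp.finset_sum_apply]
    refine Finset.sum_nonneg fun i hi => ?_
    rw [Finsupp.single_apply]
    split <;> [exact hμ i hi; exact le_refl 0]
  have hsupp : ∀ p ∈ w.support, p ∈ Y := by
    intro p hp
    rw [Finsupp.mem_support_iff] at hp
    by_contra hpY
    apply hp
    rw [hw, Finsupp.finset_sum_apply]
    refine Finset.sum_eq_zero fun i hi => ?_
    rw [Finsupp.single_apply, if_neg]
    intro he; exact hpY (he ▸ hY i hi)
  refine ⟨⟨w, hnn, ?_, hsupp, ?_⟩, fun f => ?_⟩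
  · rw [key (fun _ x => x) (fun _ => rfl) (fun _ _ _ => rfl)]; exact hsum
  · rw [key (fun p x => x • p) (fun _ => zero_smul _ _) (fun a b₁ b₂ => add_smul _ _ _)]
    exact hbary
  · exact key (fun p x => x * f p) (fun _ => zero_mul _) (fun a b₁ b₂ => add_mul _ _ _)

lemma phi_le {M : ℕ} {F : Finset ((Fin M → ℝ) × ℝ)} {ab : (Fin M → ℝ) × ℝ} (hab : ab ∈ F)
    (q : Fin M → ℝ) : dotp ab.1 q + ab.2 ≤ phiMenuM F q :=
  le_csSup ((F.finite_toSet.image _).bddAbove)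
    ⟨ab, hab, rfl⟩

lemma phi_attained {M : ℕ} {F : Finset ((Fin M → ℝ) × ℝ)} (hF : F.Nonempty) (q : Fin M → ℝ) :
    ∃ ab ∈ F, phiMenuM F q = dotp ab.1 q + ab.2 := by
  have h1 : ((fun ab : (Fin M → ℝ) × ℝ => dotp ab.1 q + ab.2) '' (F : Set _)).Nonempty :=
    (hF.to_set).image _
  have h2 := h1.csSup_mem (F.finite_toSet.image _)
  obtain ⟨ab, hab, he⟩ := h2
  exact ⟨ab, hab, he.symm⟩

set_option maxHeartbeats 2000000 in

lemma lam_exists {M : ℕ} (Y : Set (Fin M → ℝ)) (ψ : (Fin M → ℝ) → ℝ)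
    (hconv : ConvexOn ℝ Y ψ) (x₀ : Fin M → ℝ) (hx₀ : x₀ ∈ interior Y)
    (F : Finset ((Fin M → ℝ) × ℝ)) (hF : F.Nonempty) (v : ℝ)
    (hub : ∀ π : DistOn Y x₀, eValM π (fun q => phiMenuM F q - ψ q) ≤ v)
    (hopt : ∃ π : DistOn Y x₀, eValM π (fun q => phiMenuM F q - ψ q) = v) :
    ∃ l, l ∈ Lam Y ψ x₀ F v := by
  classical
  set g : (Fin M → ℝ) → ℝ := fun q => phiMenuM F q - ψ q with hg
  set S : Set ((Fin M → ℝ) × ℝ) := {z | z.1 ∈ Y ∧ z.2 ≤ g z.1} with hS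
  set C : Set ((Fin M → ℝ) × ℝ) := convexHull ℝ S with hC
  -- height bound
  have height : ∀ z ∈ C, z.1 = x₀ → z.2 ≤ v := by
    intro z hz hz1
    rw [hC, _root_.convexHull_eq] at hz
    obtain ⟨ι, t, μ, s, hμ, hsum, hmem, hcm⟩ := hz
    rw [Finset.centerMass_eq_of_sum_1 _ _ hsum] at hcm
    have h1 : ∑ i ∈ t, μ i • (s i).1 = x₀ := by
      rw [← hz1, ← hcm, Prod.fst_sum]
      exact Finset.sum_congr rfl fun i _ => rfl
    obtain ⟨π, hπ⟩ := existsDist Y x₀ t μ (fun i => (s i).1) hμ hsum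
      (fun i hi => (hmem i hi).1) h1
    have h2 : z.2 = ∑ i ∈ t, μ i * (s i).2 := by
      rw [← hcm, Prod.snd_sum]
      exact Finset.sum_congr rfl fun i _ => rfl
    calc z.2 = ∑ i ∈ t, μ i * (s i).2 := h2
      _ ≤ ∑ i ∈ t, μ i * g (s i).1 :=
          Finset.sum_le_sum fun i hi => mul_le_mul_of_nonneg_left ((hmem i hi).2) (hμ i hi)
      _ = eValM π g := (hπ g).symm
      _ ≤ v := hub π
  -- (x₀, v) ∈ C
  obtain ⟨π, hπv⟩ := hopt
  have hz₀C : ((x₀, v) : (Fin M → ℝ) × ℝ) ∈ C := by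
    have hsum1 : ∑ p ∈ π.w.support, π.w p = 1 := π.total
    have hmem : ∀ p ∈ π.w.support, ((p, g p) : (Fin M → ℝ) × ℝ) ∈ S :=
      fun p hp => ⟨π.supp p hp, le_refl _⟩
    have := Finset.centerMass_mem_convexHull (s := S) π.w.support
      (fun p hp => π.nonneg p) (by rw [hsum1]; norm_num)
      (z := fun p => ((p, g p) : (Fin M → ℝ) × ℝ)) hmem
    rw [Finset.centerMass_eq_of_sum_1 _ _ hsum1] at this
    convert this using 1
    apply Prod.ext
    · rw [Prod.fst_sum]
      exact (π.bary).symm.trans (Finset.sum_congr rfl fun p _ => rfl)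
    · rw [Prod.snd_sum]
      exact hπv.symm.trans (Finset.sum_congr rfl fun p _ => rfl)
  -- ball in Y
  obtain ⟨r1, hr1, hball1⟩ := Metric.mem_nhds_iff.1 (mem_interior_iff_mem_nhds.1 hx₀)
  have hx₀Y : x₀ ∈ Y := interior_subset hx₀
  -- ψ bounded above near x₀
  have hcont : ContinuousAt ψ x₀ := by
    have h1 : ConvexOn ℝ (interior Y) ψ :=
      hconv.subset interior_subset (hconv.1.interior)
    exact (h1.continuousOn isOpen_interior).continuousAt (isOpen_interior.mem_nhds hx₀)
  have hev : ψ ⁻¹' (Set.Iio (ψ x₀ + 1)) ∈ nhds x₀ :=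
    hcont (Iio_mem_nhds (by linarith))
  obtain ⟨r2, hr2, hball2⟩ := Metric.mem_nhds_iff.1 hev
  obtain ⟨a₀, ha₀⟩ := hF
  set r : ℝ := min r1 r2 with hr
  have hrpos : 0 < r := lt_min hr1 hr2
  set m : ℝ := dotp a₀.1 x₀ + a₀.2 - (∑ j, |a₀.1 j|) * r - ψ x₀ - 1 with hm
  have hlow : ∀ q ∈ Metric.ball x₀ r, m ≤ g q := by
    intro q hq
    have hq1 : q ∈ Y := hball1 (Metric.ball_subset_ball (min_le_left _ _) hq)
    have hq2 : ψ q < ψ x₀ + 1 := hball2 (Metric.ball_subset_ball (min_le_right _ _) hq)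
    have h1 : dotp a₀.1 q + a₀.2 ≤ phiMenuM F q := phi_le ha₀ q
    have h2 : |dotp a₀.1 (q - x₀)| ≤ (∑ j, |a₀.1 j|) * ‖q - x₀‖ := abs_dotp_le _ _
    have h3 : ‖q - x₀‖ < r := by rw [← dist_eq_norm]; exact hq
    have h4 : dotp a₀.1 (q - x₀) = dotp a₀.1 q - dotp a₀.1 x₀ := dotp_sub_right _ _ _
    have h5 : 0 ≤ (∑ j, |a₀.1 j|) := Finset.sum_nonneg fun j _ => abs_nonneg _
    have h6 : (∑ j, |a₀.1 j|) * ‖q - x₀‖ ≤ (∑ j, |a₀.1 j|) * r :=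
      mul_le_mul_of_nonneg_left h3.le h5
    have h7 := abs_le.1 h2
    simp only [hg, hm]
    linarith [h7.1]
  -- interior C nonempty
  have hUC : Metric.ball x₀ r ×ˢ Set.Iio m ⊆ interior C := by
    apply interior_maximal
    · intro z hz
      exact subset_convexHull ℝ S ⟨hball1 (Metric.ball_subset_ball (min_le_left _ _) hz.1),
        (hz.2.le).trans (hlow _ hz.1)⟩
    · exact Metric.isOpen_ball.prod isOpen_Iio
  have hintne : (interior C).Nonempty :=
    ⟨(x₀, m - 1), hUC ⟨Metric.mem_ball_self hrpos, by simp⟩⟩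
  -- (x₀, v) not in interior C
  have hz₀ni : ((x₀, v) : (Fin M → ℝ) × ℝ) ∉ interior C := by
    intro hmem
    obtain ⟨ε, hε, hballC⟩ := Metric.mem_nhds_iff.1 (mem_interior_iff_mem_nhds.1 hmem)
    have h1 : ((x₀, v + ε / 2) : (Fin M → ℝ) × ℝ) ∈ C := by
      apply hballC
      rw [Metric.mem_ball]
      simp only [Prod.dist_eq, dist_self, Real.dist_eq]
      rw [show v + ε / 2 - v = ε / 2 by ring, abs_of_pos (half_pos hε),
        max_eq_right (by linarith : (0:ℝ) ≤ ε / 2)]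
      linarith
    have := height _ h1 rfl
    linarith
  -- Hahn-Banach
  obtain ⟨f, hf⟩ := geometric_hahn_banach_open_point
    ((convex_convexHull ℝ S).interior) isOpen_interior hz₀ni
  -- f ≤ f (x₀, v) on C
  have hfC : ∀ z ∈ C, f z ≤ f (x₀, v) := by
    intro z hz
    obtain ⟨a, ha⟩ := hintne
    by_contra hcon
    push_neg at hcon
    set D : ℝ := |f z - f a| + 1 with hD
    have hDpos : 0 < D := by positivity
    set ε : ℝ := min 1 ((f z - f (x₀, v)) / (2 * D)) with hε
    have hεpos : 0 < ε := lt_min one_pos (div_pos (by linarith) (by positivity))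
    have hεle : ε ≤ 1 := min_le_left _ _
    have hmem : ε • a + (1 - ε) • z ∈ interior C :=
      (convex_convexHull ℝ S).combo_interior_closure_mem_interior ha
        (subset_closure hz) hεpos (by linarith) (by ring)
    have h1 : f (ε • a + (1 - ε) • z) < f (x₀, v) := hf _ hmem
    rw [map_add, map_smul, map_smul] at h1
    have h2 : ε * (f z - f a) ≤ ε * D := by
      apply mul_le_mul_of_nonneg_left _ hεpos.le
      rw [hD]; linarith [le_abs_self (f z - f a)]
    have h3 : ε * D ≤ (f z - f (x₀, v)) / (2 * D) * D := by
      apply mul_le_mul_of_nonneg_right (min_le_right _ _) hDpos.le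
    have h4 : (f z - f (x₀, v)) / (2 * D) * D = (f z - f (x₀, v)) / 2 := by
      field_simp
    simp only [smul_eq_mul] at h1
    nlinarith
  -- decompose f
  set c : ℝ := f (0, 1) with hc
  have hdecomp : ∀ (y : Fin M → ℝ) (s : ℝ), f (y, s) = f (y, 0) + s * c := by
    intro y s
    have : ((y, s) : (Fin M → ℝ) × ℝ) = (y, 0) + s • ((0 : Fin M → ℝ), (1:ℝ)) := by
      apply Prod.ext <;> simp
    rw [this, map_add, map_smul, smul_eq_mul]
  have hSC : S ⊆ C := subset_convexHull ℝ S
  -- c ≥ 0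
  have hc0 : 0 ≤ c := by
    by_contra hcneg
    push_neg at hcneg
    obtain ⟨n, hn⟩ := exists_nat_gt (g x₀ - v)
    have h1 : ((x₀, g x₀ - n) : (Fin M → ℝ) × ℝ) ∈ S := ⟨hx₀Y, by simp⟩
    have h2 := hfC _ (hSC h1)
    have e1 : f (x₀, g x₀ - (n:ℝ)) = f (x₀, 0) + (g x₀ - (n:ℝ)) * c := hdecomp _ _
    have e2 : f ((x₀ : Fin M → ℝ), v) = f (x₀, 0) + v * c := hdecomp _ _
    rw [e1, e2] at h2
    nlinarith [mul_pos (neg_pos.mpr hcneg) (show (0:ℝ) < v - (g x₀ - (n:ℝ)) by linarith)]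
  -- c ≠ 0
  have hcpos : 0 < c := by
    rcases lt_or_eq_of_le hc0 with h | h
    · exact h
    have hczero : c = 0 := h.symm
    exfalso
    obtain ⟨a, ha⟩ := hintne
    have h1 : f a < f (x₀, v) := hf _ ha
    have h2 : ∀ y ∈ Y, f (y, 0) ≤ f ((x₀ : Fin M → ℝ), 0) := by
      intro y hy
      have h3 := hfC _ (hSC (show ((y, g y) : (Fin M → ℝ) × ℝ) ∈ S from ⟨hy, le_refl _⟩))
      have e1 : f (y, g y) = f (y, 0) + g y * c := hdecomp _ _
      have e2 : f ((x₀ : Fin M → ℝ), v) = f (x₀, 0) + v * c := hdecomp _ _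
      rw [hczero, mul_zero, add_zero] at e1 e2
      rw [e1, e2] at h3
      exact h3
    have ha' : f a = f (a.1, 0) := by
      have e1 : f (a.1, a.2) = f (a.1, 0) + a.2 * c := hdecomp _ _
      rw [hczero, mul_zero, add_zero, Prod.mk.eta] at e1
      exact e1
    have hz' : f ((x₀ : Fin M → ℝ), v) = f (x₀, 0) := by
      have e1 : f ((x₀ : Fin M → ℝ), v) = f (x₀, 0) + v * c := hdecomp _ _
      rw [hczero, mul_zero, add_zero] at e1
      exact e1
    set u : Fin M → ℝ := x₀ - a.1 with hu
    have hfu : 0 < f ((u : Fin M → ℝ), 0) := by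
      have : ((u, 0) : (Fin M → ℝ) × ℝ) = (x₀, 0) - (a.1, 0) := by
        apply Prod.ext <;> simp [hu]
      rw [this, map_sub]
      rw [ha', hz'] at h1
      linarith
    set s : ℝ := r1 / (2 * (‖u‖ + 1)) with hs
    have hspos : 0 < s := by positivity
    have hmemY : x₀ + s • u ∈ Y := by
      apply hball1
      rw [Metric.mem_ball, dist_eq_norm]
      have : x₀ + s • u - x₀ = s • u := by abel
      rw [this, norm_smul, Real.norm_eq_abs, abs_of_pos hspos]
      have h5 : ‖u‖ < ‖u‖ + 1 := by linarith
      have h6 : s * ‖u‖ ≤ s * (‖u‖ + 1) := by nlinarith [norm_nonneg u]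
      have h7 : s * (‖u‖ + 1) = r1 / 2 := by
        rw [hs, div_mul_eq_mul_div, div_eq_div_iff (by positivity) (by norm_num)]; ring
      linarith
    have h8 := h2 _ hmemY
    have h9 : ((x₀ + s • u, 0) : (Fin M → ℝ) × ℝ) = (x₀, 0) + s • ((u : Fin M → ℝ), 0) := by
      apply Prod.ext <;> simp
    rw [h9, map_add, map_smul, smul_eq_mul] at h8
    nlinarith
  -- define l
  classical
  set e : Fin M → (Fin M → ℝ) := fun j => (fun k => if j = k then (1:ℝ) else 0) with he
  set l : Fin M → ℝ := fun j => -(f ((e j : Fin M → ℝ), 0)) / c with hl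
  have hf1 : ∀ y : Fin M → ℝ, f ((y : Fin M → ℝ), 0) = ∑ j, y j * f ((e j : Fin M → ℝ), 0) := by
    intro y
    have hy : ((y, 0) : (Fin M → ℝ) × ℝ) = ∑ j, y j • ((e j : Fin M → ℝ), 0) := by
      apply Prod.ext
      · rw [Prod.fst_sum]
        simp only [Prod.smul_mk, smul_zero]
        exact pi_eq_sum_univ y
      · rw [Prod.snd_sum]; simp
    rw [hy, map_sum]
    exact Finset.sum_congr rfl fun j _ => by rw [map_smul, smul_eq_mul]
  have hdot : ∀ y : Fin M → ℝ, dotp l (y - x₀) = -(f ((y : Fin M → ℝ), 0) - f ((x₀ : Fin M → ℝ), 0)) / c := by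
    intro y
    have hcne : c ≠ 0 := ne_of_gt hcpos
    rw [hf1 y, hf1 x₀]
    simp only [dotp, hl]
    rw [eq_div_iff hcne, Finset.sum_mul, neg_sub, ← Finset.sum_sub_distrib]
    refine Finset.sum_congr rfl fun j _ => ?_
    have hyj : (y - x₀) j = y j - x₀ j := rfl
    rw [hyj]
    field_simp
    ring
  refine ⟨l, fun y hy => ?_⟩
  have h1 : ((y, g y) : (Fin M → ℝ) × ℝ) ∈ S := ⟨hy, le_refl _⟩
  have h2 := hfC _ (hSC h1)
  have e1 : f (y, g y) = f (y, 0) + g y * c := hdecomp _ _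
  have e2 : f ((x₀ : Fin M → ℝ), v) = f (x₀, 0) + v * c := hdecomp _ _
  rw [e1, e2] at h2
  rw [hdot y]
  have hgoal : g y ≤ -(f ((y : Fin M → ℝ), 0) - f ((x₀ : Fin M → ℝ), 0)) / c + v := by
    rw [div_add' _ _ _ (ne_of_gt hcpos), le_div_iff₀ hcpos]
    nlinarith
  exact hgoal

set_option maxHeartbeats 1000000 in

lemma lam_unique {M : ℕ} (Y : Set (Fin M → ℝ)) (ψ : (Fin M → ℝ) → ℝ)
    (x₀ : Fin M → ℝ) (hJDD : JDD Y ψ x₀)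
    (F : Finset ((Fin M → ℝ) × ℝ)) (hF : F.Nonempty) (v : ℝ)
    (hopt : ∃ π : DistOn Y x₀, eValM π (fun q => phiMenuM F q - ψ q) = v)
    {l l' : Fin M → ℝ} (hl : l ∈ Lam Y ψ x₀ F v) (hl' : l' ∈ Lam Y ψ x₀ F v) :
    l = l' := by
  classical
  by_contra hne
  obtain ⟨π, hπv⟩ := hopt
  set g : (Fin M → ℝ) → ℝ := fun q => phiMenuM F q - ψ q with hg
  set t : Finset (Fin M → ℝ) := π.w.support with ht
  have hsum1 : ∑ p ∈ t, π.w p = 1 := π.total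
  have hbary : ∑ p ∈ t, π.w p • p = x₀ := π.bary
  have hval : ∑ p ∈ t, π.w p * g p = v := hπv
  -- equality on the support, for any element of Lam
  have claimA : ∀ l₀ ∈ Lam Y ψ x₀ F v, ∀ p ∈ t, g p = dotp l₀ (p - x₀) + v := by
    intro l₀ hl₀ p hp
    have hdsum : ∑ q ∈ t, π.w q * dotp l₀ (q - x₀) = 0 := by
      have h1 : ∑ q ∈ t, π.w q • (q - x₀) = (0 : Fin M → ℝ) := by
        have : ∑ q ∈ t, π.w q • (q - x₀) = (∑ q ∈ t, π.w q • q) - (∑ q ∈ t, π.w q) • x₀ := by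
          rw [Finset.sum_smul]
          rw [← Finset.sum_sub_distrib]
          exact Finset.sum_congr rfl fun q _ => smul_sub _ _ _
        rw [this, hsum1, hbary, one_smul, sub_self]
      have h2 := dotp_sum_smul l₀ t (fun q => π.w q) (fun q => q - x₀)
      rw [h1] at h2
      rw [← h2]
      simp [dotp]
    have hzero : ∑ q ∈ t, π.w q * ((dotp l₀ (q - x₀) + v) - g q) = 0 := by
      have : ∑ q ∈ t, π.w q * ((dotp l₀ (q - x₀) + v) - g q)
          = (∑ q ∈ t, π.w q * dotp l₀ (q - x₀)) + v * (∑ q ∈ t, π.w q)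
            - ∑ q ∈ t, π.w q * g q := by
        rw [Finset.mul_sum, ← Finset.sum_add_distrib, ← Finset.sum_sub_distrib]
        exact Finset.sum_congr rfl fun q _ => by ring
      rw [this, hdsum, hsum1, hval]; ring
    have hnn : ∀ q ∈ t, 0 ≤ π.w q * ((dotp l₀ (q - x₀) + v) - g q) := by
      intro q hq
      apply mul_nonneg (π.nonneg q)
      have := hl₀ q (π.supp q hq)
      simp only [hg]
      linarith [this]
    have := (Finset.sum_eq_zero_iff_of_nonneg hnn).1 hzero p hp
    have hwp : π.w p ≠ 0 := Finsupp.mem_support_iff.1 hp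
    have hwpos : 0 < π.w p := lt_of_le_of_ne (π.nonneg p) (Ne.symm hwp)
    have hfac : (dotp l₀ (p - x₀) + v) - g p = 0 := by
      rcases mul_eq_zero.1 this with h | h
      · exact absurd h hwp
      · exact h
    linarith
  -- enumerate the support
  set K : ℕ := t.card with hK
  set pfun : Fin K → (Fin M → ℝ) := fun i => ((t.equivFin).symm i : Fin M → ℝ) with hpfun
  have hpmem : ∀ i, pfun i ∈ t := fun i => ((t.equivFin).symm i).2
  have hrange : Set.range pfun = (t : Set (Fin M → ℝ)) := by
    ext q
    constructor
    · rintro ⟨i, rfl⟩; exact hpmem i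
    · intro hq; exact ⟨t.equivFin ⟨q, hq⟩, by simp [hpfun]⟩
  -- choose maximizing acts
  have hmax : ∀ i : Fin K, ∃ ab : (Fin M → ℝ) × ℝ, ab ∈ F ∧
      phiMenuM F (pfun i) = dotp ab.1 (pfun i) + ab.2 := fun i => by
    obtain ⟨ab, h1, h2⟩ := phi_attained hF (pfun i)
    exact ⟨ab, h1, h2⟩
  choose ab habF habeq using hmax
  -- build the JDD witness
  apply hJDD
  refine ⟨l - l', K, pfun, fun i => (ab i).1 - l, sub_ne_zero.mpr hne, fun i => π.supp _ (hpmem i), ?_, ?_⟩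
  · rw [hrange]
    have := Finset.centerMass_mem_convexHull (s := (t : Set (Fin M → ℝ))) t
      (fun q hq => π.nonneg q) (by rw [hsum1]; norm_num) (z := fun q => q) (fun q hq => hq)
    rwa [Finset.centerMass_eq_of_sum_1 _ _ hsum1, hbary] at this
  · intro i
    set p : Fin M → ℝ := pfun i with hp
    have hpY : p ∈ Y := π.supp _ (hpmem i)
    have hA : g p = dotp l (p - x₀) + v := claimA l hl p (hpmem i)
    have hA' : g p = dotp l' (p - x₀) + v := claimA l' hl' p (hpmem i)
    have hphi : phiMenuM F p = dotp (ab i).1 p + (ab i).2 := habeq i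
    have sub : ∀ l₀ ∈ Lam Y ψ x₀ F v, g p = dotp l₀ (p - x₀) + v →
        (ab i).1 - l₀ ∈ subdiff Y ψ p := by
      intro l₀ hl₀ hA₀
      intro q hq
      have h1 : dotp (ab i).1 q + (ab i).2 ≤ phiMenuM F q := phi_le (habF i) q
      have h2 : phiMenuM F q - ψ q ≤ dotp l₀ (q - x₀) + v := hl₀ q hq
      have h3 : phiMenuM F p - ψ p = dotp l₀ (p - x₀) + v := hA₀
      rw [hphi] at h3
      have hd : dotp ((ab i).1 - l₀) (q - p)
          = (dotp (ab i).1 q - dotp (ab i).1 p) - (dotp l₀ q - dotp l₀ p) := by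
        rw [dotp_sub_left, dotp_sub_right, dotp_sub_right]
      have h2' : dotp l₀ (q - x₀) = dotp l₀ q - dotp l₀ x₀ := dotp_sub_right _ _ _
      have h3' : dotp l₀ (p - x₀) = dotp l₀ p - dotp l₀ x₀ := dotp_sub_right _ _ _
      rw [h2'] at h2
      rw [h3'] at h3
      rw [hd]
      linarith
    refine ⟨sub l hl hA, ?_, ?_⟩
    · have := sub l' hl' hA'
      have he : (ab i).1 - l + (l - l') = (ab i).1 - l' := by abel
      rw [he]
      exact this
    · have e1 : dotp (l - l') (p - x₀) = dotp l (p - x₀) - dotp l' (p - x₀) :=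
        dotp_sub_left _ _ _
      rw [e1]
      linarith

/-- if `ψ̄` is convex on `Y` and satisfies joint-directional
differentiability relative to `p̄₀ ∈ int Y`, then every menu of affine acts has a
unique optimal supporting hyperplane. -/
theorem stmt12 {M : ℕ} (Y : Set (Fin M → ℝ)) (ψ : (Fin M → ℝ) → ℝ)
    (hconv : ConvexOn ℝ Y ψ) (x₀ : Fin M → ℝ) (hx₀ : x₀ ∈ interior Y)
    (hJDD : JDD Y ψ x₀)
    (V : Finset ((Fin M → ℝ) × ℝ) → ℝ)
    (hrep : ∀ F : Finset ((Fin M → ℝ) × ℝ), F.Nonempty →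
      (∀ π : DistOn Y x₀, eValM π (fun q => phiMenuM F q - ψ q) ≤ V F) ∧
      (∃ π : DistOn Y x₀, eValM π (fun q => phiMenuM F q - ψ q) = V F)) :
    ∀ F : Finset ((Fin M → ℝ) × ℝ), F.Nonempty → ∃! l, l ∈ Lam Y ψ x₀ F (V F) := by
  intro F hF
  obtain ⟨hub, hopt⟩ := hrep F hF
  obtain ⟨l, hl⟩ := lam_exists Y ψ hconv x₀ hx₀ F hF (V F) hub hopt
  exact ⟨l, hl, fun l' hl' => lam_unique Y ψ x₀ hJDD F hF (V F) hopt hl' hl⟩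
end

section
/- Consider Ω = {0,1} with prior p₀ = 1/2 and ψ(p) = |p − 1/2| + (p − 1/2)². With affine payoffs u_a(p) = 2.5p − 1.3125 and u_b(p) = −2.5p + 1.1875 and the zero act, one has: cav(max{0, u_a} − ψ)(1/2) = 0, cav(max{0, u_b} − ψ)(1/2) = 0, and cav(0 − ψ)(1/2) = 0, yet cav(max{0, u_a, u_b} − ψ)(1/2) > 0. -/
/-!
For each of the three small menus the net payoff lies below a line through `(1/2, 0)` on
`[0,1]` (slopes `1`, `-1`, `0`: the kink of `ψex` at `1/2` has one-sided slopes `±1`, steep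
enough to absorb one act but not both), so no mean-`1/2` split of the prior beats staying put.
With both acts, splitting into the posteriors `1/4` and `3/4` earns `1/4` at each.
-/

open Finset

/-- A finitely supported probability measure on posteriors `p ∈ [0,1]` (two states)
with mean `m`. -/
structure Dist1 (m : ℝ) where
  w : ℝ →₀ ℝ
  nonneg : ∀ p, 0 ≤ w p
  total : w.sum (fun _ x => x) = 1
  supp : ∀ p ∈ w.support, p ∈ Set.Icc (0:ℝ) 1
  mean : w.sum (fun p x => x * p) = m

/-- Concavification at the prior `1/2`: the supremum of `∫N dπ` over Bayes-plausible
distributions of posteriors. -/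
noncomputable def cavHalf (N : ℝ → ℝ) : ℝ :=
  sSup {v | ∃ π : Dist1 (1/2), v = π.w.sum (fun p x => x * N p)}

/-- The kinked measure of uncertainty `ψ(p) = |p − 1/2| + (p − 1/2)²`. -/
noncomputable def ψex (p : ℝ) : ℝ := |p - 1/2| + (p - 1/2)^2

/-- Expected utility of act `a`. -/
noncomputable def ua (p : ℝ) : ℝ := 2.5 * p - 1.3125

/-- Expected utility of act `b`. -/
noncomputable def ub (p : ℝ) : ℝ := -2.5 * p + 1.1875

namespace Dist1

variable {m : ℝ}

lemma sum_affine (π : Dist1 m) (α β : ℝ) :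
    π.w.sum (fun p x => x * (α + β * p)) = α + β * m := by
  calc π.w.sum (fun p x => x * (α + β * p))
      = α * π.w.sum (fun _ x => x) + β * π.w.sum (fun p x => x * p) := by
        simp only [Finsupp.sum, Finset.mul_sum, ← Finset.sum_add_distrib]
        exact Finset.sum_congr rfl fun p _ => by ring
    _ = α + β * m := by rw [π.total, π.mean, mul_one]

lemma sum_le_of_le_affine (π : Dist1 m) {N : ℝ → ℝ} {α β : ℝ}
    (h : ∀ p ∈ Set.Icc (0 : ℝ) 1, N p ≤ α + β * p) :
    π.w.sum (fun p x => x * N p) ≤ α + β * m := by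
  rw [← π.sum_affine]
  exact Finset.sum_le_sum fun p hp =>
    mul_le_mul_of_nonneg_left (h p (π.supp p hp)) (π.nonneg p)

noncomputable def dirac (hm : m ∈ Set.Icc (0 : ℝ) 1) : Dist1 m where
  w := Finsupp.single m 1
  nonneg p := by
    rw [Finsupp.single_apply]
    split_ifs <;> norm_num
  total := Finsupp.sum_single_index rfl
  supp p hp := by
    rwa [Finset.mem_singleton.mp (Finsupp.support_single_subset hp)]
  mean := by rw [Finsupp.sum_single_index (zero_mul _), one_mul]

lemma sum_dirac (hm : m ∈ Set.Icc (0 : ℝ) 1) (N : ℝ → ℝ) :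
    (dirac hm).w.sum (fun p x => x * N p) = N m := by
  rw [dirac, Finsupp.sum_single_index (zero_mul _), one_mul]

noncomputable def pair {a b : ℝ} (ha : a ∈ Set.Icc (0 : ℝ) 1) (hb : b ∈ Set.Icc (0 : ℝ) 1)
    (hab : (a + b) / 2 = m) : Dist1 m where
  w := Finsupp.single a (1/2) + Finsupp.single b (1/2)
  nonneg p := by
    rw [Finsupp.add_apply, Finsupp.single_apply, Finsupp.single_apply]
    split_ifs <;> norm_num
  total := by
    rw [Finsupp.sum_add_index' (fun _ => rfl) (fun _ _ _ => rfl),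
      Finsupp.sum_single_index rfl, Finsupp.sum_single_index rfl]
    norm_num
  supp p hp := by
    rcases Finset.mem_union.mp (Finsupp.support_add hp) with h | h <;>
      rwa [Finset.mem_singleton.mp (Finsupp.support_single_subset h)]
  mean := by
    rw [Finsupp.sum_add_index' (fun _ => zero_mul _) (fun _ _ _ => add_mul _ _ _),
      Finsupp.sum_single_index (zero_mul _), Finsupp.sum_single_index (zero_mul _), ← hab]
    ring

lemma sum_pair {a b : ℝ} (ha : a ∈ Set.Icc (0 : ℝ) 1) (hb : b ∈ Set.Icc (0 : ℝ) 1)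
    (hab : (a + b) / 2 = m) (N : ℝ → ℝ) :
    (pair ha hb hab).w.sum (fun p x => x * N p) = (N a + N b) / 2 := by
  rw [pair, Finsupp.sum_add_index' (fun _ => zero_mul _) (fun _ _ _ => add_mul _ _ _),
    Finsupp.sum_single_index (zero_mul _), Finsupp.sum_single_index (zero_mul _)]
  ring

end Dist1

section cavHalf

variable {N : ℝ → ℝ} {α β : ℝ}

lemma half_mem_Icc : (1/2 : ℝ) ∈ Set.Icc (0 : ℝ) 1 := by norm_num

lemma cavHalf_le_of_le_affine (h : ∀ p ∈ Set.Icc (0 : ℝ) 1, N p ≤ α + β * p) :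
    cavHalf N ≤ α + β * (1/2) :=
  csSup_le ⟨_, Dist1.dirac half_mem_Icc, rfl⟩ fun _ ⟨π, hv⟩ => hv ▸ π.sum_le_of_le_affine h

lemma sum_le_cavHalf_of_le_affine (h : ∀ p ∈ Set.Icc (0 : ℝ) 1, N p ≤ α + β * p)
    (π : Dist1 (1/2)) : π.w.sum (fun p x => x * N p) ≤ cavHalf N :=
  le_csSup ⟨α + β * (1/2), fun _ ⟨π, hv⟩ => hv ▸ π.sum_le_of_le_affine h⟩ ⟨π, rfl⟩

lemma cavHalf_eq_of_le_affine (h : ∀ p ∈ Set.Icc (0 : ℝ) 1, N p ≤ α + β * p)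
    (htouch : N (1/2) = α + β * (1/2)) : cavHalf N = N (1/2) := by
  refine le_antisymm (htouch ▸ cavHalf_le_of_le_affine h) ?_
  simpa only [Dist1.sum_dirac] using sum_le_cavHalf_of_le_affine h (Dist1.dirac half_mem_Icc)

lemma average_le_cavHalf_of_le_affine (h : ∀ p ∈ Set.Icc (0 : ℝ) 1, N p ≤ α + β * p)
    {a b : ℝ} (ha : a ∈ Set.Icc (0 : ℝ) 1) (hb : b ∈ Set.Icc (0 : ℝ) 1)
    (hab : (a + b) / 2 = 1/2) : (N a + N b) / 2 ≤ cavHalf N := by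
  simpa only [Dist1.sum_pair] using sum_le_cavHalf_of_le_affine h (Dist1.pair ha hb hab)

end cavHalf

lemma ψex_half : ψex (1/2) = 0 := by norm_num [ψex]

lemma abs_le_ψex (p : ℝ) : |p - 1/2| ≤ ψex p :=
  le_add_of_nonneg_right (sq_nonneg _)

lemma ψex_nonneg (p : ℝ) : 0 ≤ ψex p :=
  (abs_nonneg _).trans (abs_le_ψex p)

lemma max_zero_ua_sub_ψex_le (p : ℝ) : max 0 (ua p) - ψex p ≤ -(1/2) + 1 * p := by
  have hψ := abs_le_ψex p
  have := neg_abs_le (p - 1/2)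
  have := le_abs_self (p - 1/2)
  refine sub_le_iff_le_add.mpr (max_le (by linarith) ?_)
  unfold ua ψex at *
  nlinarith [sq_nonneg (p - 3/4)]

lemma max_zero_ub_sub_ψex_le (p : ℝ) : max 0 (ub p) - ψex p ≤ 1/2 + (-1) * p := by
  have hψ := abs_le_ψex p
  have := neg_abs_le (p - 1/2)
  have := le_abs_self (p - 1/2)
  refine sub_le_iff_le_add.mpr (max_le (by linarith) ?_)
  unfold ub ψex at *
  nlinarith [sq_nonneg (p - 1/4)]

lemma max_ua_ub_sub_ψex_le {p : ℝ} (hp : p ∈ Set.Icc (0 : ℝ) 1) :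
    max (max 0 (ua p)) (ub p) - ψex p ≤ 2 + 0 * p := by
  have hψ := ψex_nonneg p
  obtain ⟨hp0, hp1⟩ := hp
  refine sub_le_iff_le_add.mpr (max_le (max_le ?_ ?_) ?_) <;> norm_num [ua, ub] <;> linarith

/-- with the kinked cost `ψex`, the menus `{0,a}`, `{0,b}`, `{0}` all
have value 0 at prior `1/2`, yet the union `{0,a,b}` has strictly positive value,
violating IIA. -/
theorem stmt14 :
    cavHalf (fun p => max 0 (ua p) - ψex p) = 0 ∧
    cavHalf (fun p => max 0 (ub p) - ψex p) = 0 ∧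
    cavHalf (fun p => 0 - ψex p) = 0 ∧
    0 < cavHalf (fun p => max (max 0 (ua p)) (ub p) - ψex p) := by
  refine ⟨?_, ?_, ?_, ?_⟩
  · rw [cavHalf_eq_of_le_affine (fun p _ => max_zero_ua_sub_ψex_le p)] <;>
      norm_num [ua, ψex_half]
  · rw [cavHalf_eq_of_le_affine (fun p _ => max_zero_ub_sub_ψex_le p)] <;>
      norm_num [ub, ψex_half]
  · rw [cavHalf_eq_of_le_affine (α := 0) (β := 0)
      (fun p _ => by linarith [ψex_nonneg p])] <;>
      norm_num [ψex_half]
  · refine lt_of_lt_of_le ?_ (average_le_cavHalf_of_le_affine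
      (fun p hp => max_ua_ub_sub_ψex_le hp) (a := 1/4) (b := 3/4)
      (by norm_num) (by norm_num) (by norm_num))
    norm_num [ua, ub, ψex, abs_of_neg, abs_of_pos]
end

section
/- If F ⊆ H where H = {h : V(φ_{\{0,h\}}) = V(φ_{\{0\}})} is the set of acts irrelevant to the zero act, then V(φ_{F∪{0}}) = V(φ_{\{0\}}), provided the preference satisfies IIA (V(φ_F) = V(φ_{F∩G}) = V(φ_G) implies V(φ_{F∪G}) = V(φ_F)). -/
open Finset

variable {Ω : Type*} [Fintype Ω]

/-- `φ_F(p) = max_{f ∈ F} Σ_ω f(ω) p(ω)` for a menu `F` of utility acts `f : Ω → ℝ`. -/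
noncomputable def phiU (F : Finset (Ω → ℝ)) (p : Ω → ℝ) : ℝ :=
  sSup ((fun f => ∑ ω, f ω * p ω) '' (F : Set (Ω → ℝ)))

section IIA

variable {α β : Type*} [DecidableEq α]

def IsIIA (v : Finset α → β) : Prop :=
  ∀ F G : Finset α, F.Nonempty → G.Nonempty → (F ∩ G).Nonempty →
    v F = v (F ∩ G) → v G = v (F ∩ G) → v (F ∪ G) = v F

/-- IIA applied to the menus `insert a S` and `{a, f}`, which meet exactly in `{a}`. -/
theorem IsIIA.insert_insert_eq_singleton {v : Finset α → β} (hv : IsIIA v) {a f : α}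
    {S : Finset α} (hf : f ∉ insert a S) (hS : v (insert a S) = v {a})
    (hpair : v {a, f} = v {a}) : v (insert a (insert f S)) = v {a} := by
  have hinter : insert a S ∩ {a, f} = {a} := by
    ext g
    simp only [mem_inter, mem_insert, mem_singleton] at hf ⊢
    grind
  have hunion : insert a S ∪ {a, f} = insert a (insert f S) := by
    ext g
    simp only [mem_union, mem_insert, mem_singleton]
    tauto
  rw [← hunion, hv _ _ (insert_nonempty _ _) (insert_nonempty _ _)
    (by simp [hinter]) (by rw [hinter, hS]) (by rw [hinter, hpair]), hS]

theorem IsIIA.insert_eq_singleton {v : Finset α → β} (hv : IsIIA v) (a : α) (F : Finset α)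
    (hF : ∀ f ∈ F, v {a, f} = v {a}) : v (insert a F) = v {a} := by
  induction F using Finset.induction_on with
  | empty => rfl
  | @insert f S hfS ih =>
    have hS := ih fun g hg => hF g (mem_insert_of_mem hg)
    by_cases hfa : f = a
    · rwa [hfa, insert_idem]
    · exact hv.insert_insert_eq_singleton (by simp [hfa, hfS]) hS (hF f (mem_insert_self f S))

end IIA

theorem stmt18_general (p₀ : Ω → ℝ) (c : FinDist Ω → EReal)
    (hIIA : ∀ F G : Finset (Ω → ℝ), F.Nonempty → G.Nonempty → (F ∩ G).Nonempty →
      V c p₀ (phiU F) = V c p₀ (phiU (F ∩ G)) → V c p₀ (phiU G) = V c p₀ (phiU (F ∩ G)) →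
      V c p₀ (phiU (F ∪ G)) = V c p₀ (phiU F))
    (F : Finset (Ω → ℝ))
    (hFH : ∀ f ∈ F, V c p₀ (phiU {0, f}) = V c p₀ (phiU {0})) :
    V c p₀ (phiU (insert 0 F)) = V c p₀ (phiU {0}) :=
  IsIIA.insert_eq_singleton (v := fun F => V c p₀ (phiU F)) hIIA 0 F hFH

/-- under IIA, if every act in `F` is irrelevant to the zero act
(`V(φ_{{0,f}}) = V(φ_{{0}})`), then so is the whole menu: `V(φ_{F ∪ {0}}) = V(φ_{{0}})`. -/
theorem stmt18 (p₀ : Ω → ℝ) (c : FinDist Ω → EReal)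
    (hIIA : ∀ F G : Finset (Ω → ℝ), F.Nonempty → G.Nonempty → (F ∩ G).Nonempty →
      V c p₀ (phiU F) = V c p₀ (phiU (F ∩ G)) → V c p₀ (phiU G) = V c p₀ (phiU (F ∩ G)) →
      V c p₀ (phiU (F ∪ G)) = V c p₀ (phiU F))
    (F : Finset (Ω → ℝ)) (hF : F.Nonempty)
    (hFH : ∀ f ∈ F, V c p₀ (phiU {0, f}) = V c p₀ (phiU {0})) :
    V c p₀ (phiU (insert 0 F)) = V c p₀ (phiU {0}) :=
  stmt18_general p₀ c hIIA F hFH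
end
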